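/- arXiv:2108.08255 — 2 statements merged into one kernel-verified Lean document; each statement's English description precedes it below -/
import Mathlib

section
/- (Computational equivalency for the consolidated cost.) Suppose the block stage cost depends only on the first coordinate: $\bar c(x^h, a_m; \bar\theta^h) = \bar c(s^{hm}, a_m; \theta^{hm})$ where $x^h = (s^{hm},\dots,s^{hm+m-1})$. Let $u$ satisfy the consolidated DP equation $u(x^h, a_m; \bar\theta^h) = \bar c(s^{hm}, a_m; \theta^{hm}) + \gamma \sum_{x^{h+1}} \bar F(x^{h+1}\mid x^h;\bar\theta^h)\, \mathbb{E}_{\bar\theta^{h+1}}[u(x^{h+1}, a_m; \bar\theta^{h+1})]$, and define the aggregated value $\tilde u(s^{hm}, a_m; \bar\theta^h) := \sum_{s^{hm+1},\dots,s^{hm+m-1}} \Pr(s^{hm+1},\dots,s^{hm+m-1}\mid s^{hm}; \bar\theta^h)\, u(x^h, a_m; \bar\theta^h)$. Then $\tilde u$ satisfies the reduced DP equation $\tilde u(s^{hm}, a_m; \bar\theta^h) = \bar c(s^{hm}, a_m; \theta^{hm}) + \gamma \sum_{s^{(h+1)m}} \Pr(s^{(h+1)m}\mid s^{hm};\bar\theta^h)\,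 \mathbb{E}_{\bar\theta^{h+1}}[\tilde u(s^{(h+1)m}, a_m; \bar\theta^{h+1})]$. -/
open Finset

variable {S Θ : Type*} [Fintype S] [DecidableEq S] [Fintype Θ]

/-- Within-block probability `Pr(s^{hm+1},…,s^{hm+m-1} | s^{hm}; θ̄)`
for a block `x = (x 0, …, x n)` of length `m = n+1`:
`∏_{l=0}^{m-2} Tr(x_{l+1} | x_l; θ̄_l)`. -/
def withinBlock (Tr : S → Θ → S → ℝ) (n : ℕ)
    (x : Fin (n + 1) → S) (θb : Fin (n + 1) → Θ) : ℝ :=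
  ∏ i : Fin n, Tr (x i.castSucc) (θb i.castSucc) (x i.succ)

/-- Induced block transition kernel
`F̄(x^{h+1} | x^h; θ̄^h, θ̄^{h+1}) = Tr(x'_0 | x_{m-1}; θ̄_{m-1}) ·
∏_{l=0}^{m-2} Tr(x'_{l+1} | x'_l; θ̄'_l)`. -/
def blockKernel (Tr : S → Θ → S → ℝ) (n : ℕ)
    (x : Fin (n + 1) → S) (θb : Fin (n + 1) → Θ)
    (x' : Fin (n + 1) → S) (θb' : Fin (n + 1) → Θ) : ℝ :=
  Tr (x (Fin.last n)) (θb (Fin.last n)) (x' 0) * withinBlock Tr n x' θb'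

/-- `m`-step transition probability `Pr(s^{(h+1)m} | s^{hm}; θ̄^h)`:
sum over intermediate labels of the product of `m` one-step transitions. -/
def mStep (Tr : S → Θ → S → ℝ) (n : ℕ)
    (s : S) (θb : Fin (n + 1) → Θ) (s' : S) : ℝ :=
  ∑ x : Fin (n + 1) → S,
    (if x 0 = s then withinBlock Tr n x θb * Tr (x (Fin.last n)) (θb (Fin.last n)) s'
     else 0)

set_option linter.unusedSectionVars false

lemma sum_pi_cons (n : ℕ) (f : (Fin (n+1) → S) → ℝ) :
    ∑ x : Fin (n+1) → S, f x = ∑ t : S, ∑ y : Fin n → S, f (Fin.cons t y) :=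
  calc ∑ x : Fin (n+1) → S, f x
      = ∑ p : S × (Fin n → S), f (Fin.cons p.1 p.2) :=
        Fintype.sum_equiv (Fin.consEquiv fun _ => S).symm _ _ (fun x => by
          congr 1; exact ((Fin.consEquiv fun _ => S).apply_symm_apply x).symm)
    _ = ∑ t : S, ∑ y : Fin n → S, f (Fin.cons t y) :=
        Fintype.sum_prod_type (f := fun p : S × (Fin n → S) => f (Fin.cons p.1 p.2))

lemma withinBlock_cons (Tr : S → Θ → S → ℝ) (n : ℕ) (t : S) (y : Fin (n+1) → S)
    (θb : Fin (n+2) → Θ) :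
    withinBlock Tr (n+1) (Fin.cons t y) θb
      = Tr t (θb 0) (y 0) * withinBlock Tr n y (θb ∘ Fin.succ) := by
  unfold withinBlock
  rw [Fin.prod_univ_succ]
  congr 1

lemma sum_fiber (k : ℕ) (F : (Fin (k+1) → S) → ℝ) :
    ∑ y : Fin (k+1) → S, F y
      = ∑ s1 : S, ∑ y : Fin (k+1) → S, if y 0 = s1 then F y else 0 := by
  rw [Finset.sum_comm]
  refine Finset.sum_congr rfl fun y _ => ?_
  simp

lemma sum_withinBlock (Tr : S → Θ → S → ℝ) (hTrsum : ∀ s θ, ∑ s', Tr s θ s' = 1) :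
    ∀ (n : ℕ) (θb : Fin (n+1) → Θ) (s : S),
      ∑ x : Fin (n+1) → S, (if x 0 = s then withinBlock Tr n x θb else 0) = 1 := by
  intro n
  induction n with
  | zero =>
    intro θb s
    rw [sum_pi_cons]
    simp [withinBlock]
  | succ n ih =>
    intro θb s
    rw [sum_pi_cons]
    have h1 : ∀ t : S, (∑ y : Fin (n+1) → S,
        if (Fin.cons t y : Fin (n+2) → S) 0 = s then withinBlock Tr (n+1) (Fin.cons t y) θb else 0)
        = if t = s then (∑ y : Fin (n+1) → S,
            Tr t (θb 0) (y 0) * withinBlock Tr n y (θb ∘ Fin.succ)) else 0 := by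
      intro t
      by_cases h : t = s
      · simp only [Fin.cons_zero, if_pos h, withinBlock_cons, Finset.mul_sum]
      · simp [Fin.cons_zero, h]
    simp only [h1]
    have h2 : ∀ t : S, (∑ y : Fin (n+1) → S,
        Tr t (θb 0) (y 0) * withinBlock Tr n y (θb ∘ Fin.succ)) = 1 := by
      intro t
      rw [sum_fiber]
      have h3 : ∀ s1 : S, (∑ y : Fin (n+1) → S,
          if y 0 = s1 then Tr t (θb 0) (y 0) * withinBlock Tr n y (θb ∘ Fin.succ) else 0)
          = Tr t (θb 0) s1 * ∑ y : Fin (n+1) → S,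
              (if y 0 = s1 then withinBlock Tr n y (θb ∘ Fin.succ) else 0) := by
        intro s1
        rw [Finset.mul_sum]
        refine Finset.sum_congr rfl fun y _ => ?_
        by_cases h : y 0 = s1 <;> simp [h]
      simp only [h3, ih]
      simp [hTrsum]
    simp only [h2]
    simp [Finset.sum_ite_eq' Finset.univ s (fun _ => (1:ℝ))]

lemma mul_ite_sum {α : Type*} [Fintype α] (p : α → Prop) [DecidablePred p]
    (a : ℝ) (f : α → ℝ) :
    ∑ x, (if p x then a * f x else 0) = a * ∑ x, (if p x then f x else 0) := by
  rw [Finset.mul_sum]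
  exact Finset.sum_congr rfl fun x _ => by by_cases h : p x <;> simp [h]

lemma key_collapse (Tr : S → Θ → S → ℝ) (q : Θ → ℝ) (n : ℕ)
    (u : (Fin (n + 1) → S) → (Fin (n + 1) → Θ) → ℝ)
    (ut : S → (Fin (n + 1) → Θ) → ℝ)
    (hut : ∀ s θb, ut s θb =
      ∑ x : Fin (n + 1) → S, (if x 0 = s then withinBlock Tr n x θb * u x θb else 0))
    (t : S) (θL : Θ) :
    (∑ x' : Fin (n+1) → S, ∑ θb' : Fin (n+1) → Θ, (∏ i, q (θb' i)) *
        (Tr t θL (x' 0) * withinBlock Tr n x' θb') * u x' θb')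
      = ∑ s' : S, Tr t θL s' *
          ∑ θb' : Fin (n+1) → Θ, (∏ i, q (θb' i)) * ut s' θb' := by
  rw [sum_fiber]
  refine Finset.sum_congr rfl fun s' _ => ?_
  have h1 : ∀ x' : Fin (n+1) → S,
      (if x' 0 = s' then (∑ θb' : Fin (n+1) → Θ, (∏ i, q (θb' i)) *
          (Tr t θL (x' 0) * withinBlock Tr n x' θb') * u x' θb') else 0)
      = Tr t θL s' * ∑ θb' : Fin (n+1) → Θ, (∏ i, q (θb' i)) *
          (if x' 0 = s' then withinBlock Tr n x' θb' * u x' θb' else 0) := by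
    intro x'
    by_cases h : x' 0 = s'
    · rw [if_pos h, h, Finset.mul_sum]
      refine Finset.sum_congr rfl fun θb' _ => ?_
      rw [if_pos rfl]; ring
    · simp [h]
  rw [Finset.sum_congr rfl fun x' _ => h1 x', ← Finset.mul_sum]
  congr 1
  rw [Finset.sum_comm]
  refine Finset.sum_congr rfl fun θb' _ => ?_
  rw [hut s' θb', Finset.mul_sum]

/-- computational equivalency for the consolidated cost: if the
block stage cost depends only on the first label/type of the block and `u`
solves the consolidated DP equation, then the aggregated value
`ũ(s,θ̄) = ∑ Pr(intermediate labels | s; θ̄) u(x,θ̄)` solves the reduced DP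
equation driven by the `m`-step transition probability. -/
theorem computational_equivalency_ACC
    (γ : ℝ) (hγ0 : 0 < γ) (hγ1 : γ < 1)
    (Tr : S → Θ → S → ℝ) (hTrpos : ∀ s θ s', 0 ≤ Tr s θ s')
    (hTrsum : ∀ s θ, ∑ s', Tr s θ s' = 1)
    (q : Θ → ℝ) (hqpos : ∀ θ, 0 ≤ q θ) (hqsum : ∑ θ, q θ = 1)
    (n : ℕ)
    (c : S → Θ → ℝ)
    (u : (Fin (n + 1) → S) → (Fin (n + 1) → Θ) → ℝ)
    -- consolidated DP equation (cost depends only on first coordinates):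
    (hu : ∀ x θb, u x θb =
      c (x 0) (θb 0) + γ * ∑ x' : Fin (n + 1) → S, ∑ θb' : Fin (n + 1) → Θ,
        (∏ i, q (θb' i)) * blockKernel Tr n x θb x' θb' * u x' θb')
    (ut : S → (Fin (n + 1) → Θ) → ℝ)
    -- aggregated value ũ:
    (hut : ∀ s θb, ut s θb =
      ∑ x : Fin (n + 1) → S, (if x 0 = s then withinBlock Tr n x θb * u x θb else 0)) :
    ∀ s θb, ut s θb =
      c s (θb 0) + γ * ∑ s' : S, mStep Tr n s θb s' *
        ∑ θb' : Fin (n + 1) → Θ, (∏ i, q (θb' i)) * ut s' θb' := by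
  intro s0 θb
  rw [hut]
  have step1 : ∀ x : Fin (n+1) → S,
      (if x 0 = s0 then withinBlock Tr n x θb * u x θb else 0)
        = (if x 0 = s0 then withinBlock Tr n x θb else 0) * c s0 (θb 0)
          + γ * (if x 0 = s0 then withinBlock Tr n x θb *
              (∑ x' : Fin (n+1) → S, ∑ θb' : Fin (n+1) → Θ,
                (∏ i, q (θb' i)) * blockKernel Tr n x θb x' θb' * u x' θb') else 0) := by
    intro x
    by_cases h : x 0 = s0
    · rw [if_pos h, if_pos h, if_pos h, hu x θb, h]; ring
    · simp [h]
  rw [Finset.sum_congr rfl fun x _ => step1 x, Finset.sum_add_distrib,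
      ← Finset.sum_mul, sum_withinBlock Tr hTrsum n θb s0, one_mul,
      ← Finset.mul_sum]
  congr 2
  -- LHS: ∑ x ite (x0=s0) (W x * Sx) 0 ; RHS: ∑ s', mStep * R
  have rhs1 : ∀ s' : S, mStep Tr n s0 θb s' *
        (∑ θb' : Fin (n + 1) → Θ, (∏ i, q (θb' i)) * ut s' θb')
      = ∑ x : Fin (n+1) → S, (if x 0 = s0 then
          withinBlock Tr n x θb * (Tr (x (Fin.last n)) (θb (Fin.last n)) s' *
            ∑ θb' : Fin (n + 1) → Θ, (∏ i, q (θb' i)) * ut s' θb') else 0) := by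
    intro s'
    rw [mStep, Finset.sum_mul]
    refine Finset.sum_congr rfl fun x _ => ?_
    by_cases h : x 0 = s0 <;> simp [h, mul_assoc]
  rw [Finset.sum_congr rfl fun s' _ => rhs1 s', Finset.sum_comm]
  refine Finset.sum_congr rfl fun x _ => ?_
  by_cases h : x 0 = s0
  · simp only [if_pos h, ← Finset.mul_sum]
    congr 1
    rw [← key_collapse Tr q n u ut hut (x (Fin.last n)) (θb (Fin.last n))]
    simp only [blockKernel]
  · simp [h]
end

section
/- Let $p(m) = \bar p\,(1 - CDF_m(\bar\tau_N))$ with $CDF_m$ the Erlang$(m,\beta)$ CDF and $\bar p \in (0,1]$. Define the per-attack-stage rate of correct decisions $r(m) = p(m)/m$. Then $r(m) \to 0$ as $m \to \infty$, and $r(1) = \bar p\, e^{-\beta\bar\tau_N}$; in particular for $\beta\bar\tau_N$ large enough, $r(2) > r(1)$, so $m=1$ need not maximize the per-stage correct-decision rate. -/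
open Filter

/-- with `p(m) = p̄ (1 - CDF_m(τ̄_N))` (Erlang(m,β) CDF) and the
per-attack-stage correct-decision rate `r(m) = p(m)/m`: `r(m) → 0` as
`m → ∞`, `r(1) = p̄ e^{-βτ̄_N}`, and for `βτ̄_N` large enough `r(2) > r(1)` —
so `m = 1` need not maximize the per-stage correct-decision rate. -/
theorem per_stage_rate_law_of_rational_inattention
    (pbar : ℝ) (hp0 : 0 < pbar) (hp1 : pbar ≤ 1)
    (r : ℝ → ℕ → ℝ)
    -- `r x m = p̄ (∑_{n<m} e^{-x} x^n / n!) / m` where `x = βτ̄_N`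
    (hr : ∀ x m, r x m =
      pbar * (∑ n ∈ Finset.range m, Real.exp (-x) * x ^ n / (Nat.factorial n : ℝ)) / m) :
    (∀ x : ℝ, 0 < x → Tendsto (fun m : ℕ => r x m) atTop (nhds 0)) ∧
    (∀ x : ℝ, 0 < x → r x 1 = pbar * Real.exp (-x)) ∧
    (∃ X : ℝ, ∀ x : ℝ, X < x → r x 1 < r x 2) := by
  refine ⟨?_, ?_, ⟨1, ?_⟩⟩
  · intro x hx
    have hsum : ∀ m : ℕ,
        (∑ n ∈ Finset.range m, Real.exp (-x) * x ^ n / (Nat.factorial n : ℝ)) ≤ 1 := by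
      intro m
      have h1 : (∑ n ∈ Finset.range m, Real.exp (-x) * x ^ n / (Nat.factorial n : ℝ))
          = Real.exp (-x) * ∑ n ∈ Finset.range m, x ^ n / (Nat.factorial n : ℝ) := by
        rw [Finset.mul_sum]; congr 1; ext n; ring
      rw [h1]
      have h2 : (∑ n ∈ Finset.range m, x ^ n / (Nat.factorial n : ℝ)) ≤ Real.exp x :=
        Real.sum_le_exp_of_nonneg hx.le m
      calc Real.exp (-x) * ∑ n ∈ Finset.range m, x ^ n / (Nat.factorial n : ℝ)
          ≤ Real.exp (-x) * Real.exp x := by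
            exact mul_le_mul_of_nonneg_left h2 (Real.exp_pos _).le
        _ = 1 := by rw [← Real.exp_add]; simp
    have h0 : ∀ m : ℕ, 0 ≤ r x m := by
      intro m
      rw [hr]
      have : 0 ≤ (∑ n ∈ Finset.range m, Real.exp (-x) * x ^ n / (Nat.factorial n : ℝ)) := by
        apply Finset.sum_nonneg
        intro n _
        positivity
      positivity
    have hle : ∀ m : ℕ, r x m ≤ pbar / m := by
      intro m
      rcases Nat.eq_zero_or_pos m with h | h
      · subst h; rw [hr]; simp
      · rw [hr]
        have hm : (0:ℝ) < m := Nat.cast_pos.mpr h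
        gcongr
        exact mul_le_of_le_one_right hp0.le (hsum m)
    exact squeeze_zero h0 hle (tendsto_const_div_atTop_nhds_zero_nat pbar)
  · intro x hx
    rw [hr]; simp
  · intro x hx
    rw [hr, hr]
    have hxp : (0:ℝ) < x := lt_trans one_pos hx
    simp only [Finset.sum_range_succ, Finset.sum_range_one, pow_zero, pow_one,
      Nat.factorial_zero, Nat.factorial_one, Nat.cast_one, Nat.cast_ofNat]
    rw [div_lt_div_iff₀ (by norm_num) (by norm_num)]
    have he := Real.exp_pos (-x)
    nlinarith [mul_pos hp0 (mul_pos he (sub_pos.mpr hx))]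
end
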